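/- For every n ∈ ℕ, the matrices L_n satisfy the recursion L_0 = (1) and L_{n+1} = F_{L_n}·(L_n ⊕ 1), where L_n ⊕ 1 is the block diagonal matrix with blocks L_n and the 1×1 identity, and F_{L_n} is the block matrix with top-left block the (n+1)×(n+1) identity, top-right block the zero column, bottom-left row equal to −(L_{n+1}^{-1}[n+1,j])_{0≤j≤n} (the last row of the inverse of L_{n+1} without its last entry), and bottom-right entry 1. -/
import Mathlib


/-- The heights of an `L^m_n`-path of order `n` (the abscissas `x i = m + i` are
determined, so only the heights `y i ∈ {0, …, n}`, encoded as `Fin (n+1)`, are recorded):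
`y (k+1) ∈ {y k, y k - 1}` and a fall step at position `k` forces `y k ≥ n - k`. -/
def IsLPath (n : ℕ) (y : Fin (n + 1) → Fin (n + 1)) : Prop :=
  ∀ k : Fin n,
    ((y k.succ = y k.castSucc ∨ (y k.succ : ℕ) + 1 = (y k.castSucc : ℕ)) ∧
      ((y k.succ : ℕ) + 1 = (y k.castSucc : ℕ) → n - (k : ℕ) ≤ (y k.castSucc : ℕ)))

/-- The weight of an `L`-type path: a fall step from `(k, j)` to `(k+1, j-1)` has weight
`t j (k + j - n)` and a horizontal step has weight `1`; the weight of the path is the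
product of the weights of its steps. -/
def lweight {R : Type*} [CommRing R] (n : ℕ) (t : ℕ → ℕ → R)
    (y : Fin (n + 1) → Fin (n + 1)) : R :=
  ∏ k : Fin n,
    if (y k.succ : ℕ) + 1 = (y k.castSucc : ℕ)
    then t (y k.castSucc : ℕ) ((k : ℕ) + (y k.castSucc : ℕ) - n) else 1

open scoped Classical in
/-- The matrix `L n`: its `(i, j)` entry is the sum of the weights of all `L^0_n`-paths
with `y 0 = i` and `y n = j`. -/
noncomputable def Lmat {R : Type*} [CommRing R] (n : ℕ) (t : ℕ → ℕ → R) :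
    Matrix (Fin (n + 1)) (Fin (n + 1)) R :=
  Matrix.of fun i j =>
    ∑ y ∈ Finset.univ.filter
        (fun y : Fin (n + 1) → Fin (n + 1) => IsLPath n y ∧ y 0 = i ∧ y (Fin.last n) = j),
      lweight n t y

section Aux

variable {R : Type*} [CommRing R]

lemma IsLPath.antitone {n : ℕ} {y : Fin (n + 1) → Fin (n + 1)} (h : IsLPath n y) :
    Antitone y := by
  rw [Fin.antitone_iff_succ_le]
  intro k
  rcases (h k).1 with h1 | h1
  · exact h1.le
  · rw [Fin.le_def]; omega

open scoped Classical in
lemma Lmat_apply (n : ℕ) (t : ℕ → ℕ → R) (i j : Fin (n + 1)) :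
    Lmat n t i j = ∑ y ∈ Finset.univ.filter
        (fun y : Fin (n + 1) → Fin (n + 1) => IsLPath n y ∧ y 0 = i ∧ y (Fin.last n) = j),
      lweight n t y := rfl

lemma Lmat_eq_zero (n : ℕ) (t : ℕ → ℕ → R) {i j : Fin (n + 1)} (hij : i < j) :
    Lmat n t i j = 0 := by
  classical
  rw [Lmat_apply, Finset.filter_false_of_mem, Finset.sum_empty]
  rintro y - ⟨hy, h0, hl⟩
  have := hy.antitone (Fin.zero_le (Fin.last n))
  rw [h0, hl] at this
  exact absurd this (not_le.2 hij)

lemma lweight_const (n : ℕ) (t : ℕ → ℕ → R) (i : Fin (n + 1)) :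
    lweight n t (fun _ => i) = 1 := by
  unfold lweight
  simp

lemma Lmat_diag (n : ℕ) (t : ℕ → ℕ → R) (i : Fin (n + 1)) : Lmat n t i i = 1 := by
  classical
  rw [Lmat_apply]
  have hfilter : Finset.univ.filter
      (fun y : Fin (n + 1) → Fin (n + 1) => IsLPath n y ∧ y 0 = i ∧ y (Fin.last n) = i)
      = {fun _ => i} := by
    ext y
    simp only [Finset.mem_filter, Finset.mem_univ, true_and, Finset.mem_singleton]
    constructor
    · rintro ⟨hy, h0, hl⟩
      funext m
      have h1 : y m ≤ y 0 := hy.antitone (Fin.zero_le m)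
      have h2 : y (Fin.last n) ≤ y m := hy.antitone (Fin.le_last m)
      rw [h0] at h1; rw [hl] at h2
      exact le_antisymm h1 h2
    · rintro rfl
      exact ⟨fun k => ⟨Or.inl rfl, fun h => absurd h (by simp)⟩, rfl, rfl⟩
  rw [hfilter, Finset.sum_singleton, lweight_const]

lemma Lmat_blockTriangular (n : ℕ) (t : ℕ → ℕ → R) :
    (Lmat n t).BlockTriangular OrderDual.toDual :=
  fun _ _ h => Lmat_eq_zero n t h

lemma Lmat_det (n : ℕ) (t : ℕ → ℕ → R) : (Lmat n t).det = 1 := by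
  rw [Matrix.det_of_lowerTriangular _ (Lmat_blockTriangular n t)]
  simp [Lmat_diag]

lemma Lmat_isUnit_det (n : ℕ) (t : ℕ → ℕ → R) : IsUnit (Lmat n t).det := by
  rw [Lmat_det]; exact isUnit_one

lemma Lmat_inv_last_last (n : ℕ) (t : ℕ → ℕ → R) :
    (Lmat n t)⁻¹ (Fin.last n) (Fin.last n) = 1 := by
  have hdet := Lmat_isUnit_det n t
  haveI := (Lmat n t).invertibleOfIsUnitDet hdet
  have hinvtri := Matrix.blockTriangular_inv_of_blockTriangular (Lmat_blockTriangular n t)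
  have hmul := Matrix.mul_nonsing_inv _ hdet
  have hent := congrFun (congrFun hmul (Fin.last n)) (Fin.last n)
  rw [Matrix.mul_apply, Fin.sum_univ_castSucc] at hent
  have hz : ∀ k : Fin n, (Lmat n t)⁻¹ k.castSucc (Fin.last n) = 0 := fun k =>
    hinvtri (by exact Fin.castSucc_lt_last k)
  simpa [hz, Lmat_diag, Matrix.one_apply] using hent

end Aux
section Shift
variable {R : Type*} [CommRing R]

lemma lweight_shift (n : ℕ) (t : ℕ → ℕ → R) (y : Fin (n + 2) → Fin (n + 2))
    (z : Fin (n + 1) → Fin (n + 1))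
    (hz : ∀ m : Fin (n + 1), (z m : ℕ) = (y m.succ : ℕ))
    (h0 : (y (Fin.succ (0 : Fin (n + 1))) : ℕ) = (y (Fin.castSucc (0 : Fin (n + 1))) : ℕ)) :
    lweight (n + 1) t y = lweight n t z := by
  unfold lweight
  rw [Fin.prod_univ_succ]
  rw [if_neg (by omega), one_mul]
  refine Finset.prod_congr rfl fun m _ => ?_
  have e1 : (z m.succ : ℕ) = (y m.succ.succ : ℕ) := hz m.succ
  have e2 : (z m.castSucc : ℕ) = (y m.succ.castSucc : ℕ) := by
    rw [hz m.castSucc, Fin.succ_castSucc]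
  rw [e1, e2]
  have e3 : ((m.succ : ℕ)) + (y m.succ.castSucc : ℕ) - (n + 1)
      = (m : ℕ) + (y m.succ.castSucc : ℕ) - n := by
    rw [Fin.val_succ]; omega
  rw [e3]

lemma Lmat_castSucc (n : ℕ) (t : ℕ → ℕ → R) (i j : Fin (n + 1)) :
    Lmat (n + 1) t i.castSucc j.castSucc = Lmat n t i j := by
  classical
  rw [Lmat_apply, Lmat_apply]
  -- forward map
  have hbound : ∀ y : Fin (n + 2) → Fin (n + 2), ∀ k : Fin (n + 1),
      min (y k.succ : ℕ) n < n + 1 := fun y k => by omega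
  set Φ : (Fin (n + 2) → Fin (n + 2)) → (Fin (n + 1) → Fin (n + 1)) :=
    fun y k => ⟨min (y k.succ : ℕ) n, hbound y k⟩ with hΦ
  set Ψ : (Fin (n + 1) → Fin (n + 1)) → (Fin (n + 2) → Fin (n + 2)) :=
    fun z => Fin.cases i.castSucc (fun k => (z k).castSucc) with hΨ
  -- facts about members of the source
  have key : ∀ y : Fin (n + 2) → Fin (n + 2),
      IsLPath (n + 1) y → y 0 = i.castSucc → y (Fin.last (n + 1)) = j.castSucc →
      (∀ m : Fin (n + 2), (y m : ℕ) ≤ (i : ℕ)) ∧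
        (y (Fin.succ (0 : Fin (n + 1))) : ℕ) = (y (Fin.castSucc (0 : Fin (n + 1))) : ℕ) := by
    intro y hy h0 hl
    have hle : ∀ m : Fin (n + 2), (y m : ℕ) ≤ (i : ℕ) := by
      intro m
      have := hy.antitone (Fin.zero_le m)
      rw [h0] at this
      simpa [Fin.le_def] using this
    refine ⟨hle, ?_⟩
    rcases (hy 0).1 with h1 | h1
    · rw [h1]
    · have := (hy 0).2 h1
      have h2 := hle (Fin.castSucc (0 : Fin (n + 1)))
      have hi : (i : ℕ) < n + 1 := i.isLt
      simp only [Fin.val_zero, Nat.sub_zero] at this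
      omega
  refine Finset.sum_nbij' Φ Ψ ?_ ?_ ?_ ?_ ?_
  · -- Φ maps into target
    intro y hy
    simp only [Finset.mem_filter, Finset.mem_univ, true_and] at hy ⊢
    obtain ⟨hy, h0, hl⟩ := hy
    obtain ⟨hle, hstep0⟩ := key y hy h0 hl
    have hval : ∀ k : Fin (n + 1), (Φ y k : ℕ) = (y k.succ : ℕ) := by
      intro k
      simp only [hΦ]
      have := hle k.succ
      omega
    refine ⟨?_, ?_, ?_⟩
    · intro k
      have e1 : (Φ y k.succ : ℕ) = (y k.succ.succ : ℕ) := hval k.succ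
      have e2 : (Φ y k.castSucc : ℕ) = (y k.succ.castSucc : ℕ) := by
        rw [hval k.castSucc, Fin.succ_castSucc]
      obtain ⟨hor, hfall⟩ := hy k.succ
      constructor
      · rcases hor with h1 | h1
        · left; apply Fin.ext; rw [e1, e2, h1]
        · right; rw [e1, e2]; exact h1
      · intro h
        have := hfall (by rw [← e1, ← e2]; exact h)
        rw [e2, Fin.val_succ] at *
        omega
    · apply Fin.ext
      have := hval 0
      rw [this, hstep0]
      simp [h0]
    · apply Fin.ext
      have := hval (Fin.last n)
      rw [this, Fin.succ_last, hl]
      simp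
  · -- Ψ maps into source
    intro z hz
    simp only [Finset.mem_filter, Finset.mem_univ, true_and] at hz ⊢
    obtain ⟨hz, h0, hl⟩ := hz
    have hsucc : ∀ m : Fin (n + 1), Ψ z m.succ = (z m).castSucc := fun m => by
      simp [hΨ]
    have hzero : Ψ z 0 = i.castSucc := by simp [hΨ]
    refine ⟨?_, hzero, ?_⟩
    · intro k
      refine Fin.cases ?_ ?_ k
      · constructor
        · left
          rw [Fin.castSucc_zero, hzero, hsucc 0, h0]
        · intro h
          rw [Fin.castSucc_zero, hzero, hsucc 0, h0] at h
          simp at h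
      · intro m
        have e1 : Ψ z m.succ.succ = (z m.succ).castSucc := hsucc m.succ
        have e2 : Ψ z m.succ.castSucc = (z m.castSucc).castSucc := by
          rw [← Fin.succ_castSucc, hsucc m.castSucc]
        obtain ⟨hor, hfall⟩ := hz m
        constructor
        · rcases hor with h1 | h1
          · left; rw [e1, e2, h1]
          · right; rw [e1, e2]; simpa using h1
        · intro h
          rw [e1, e2] at h
          simp only [Fin.coe_castSucc] at h
          have := hfall h
          rw [e2]
          simp only [Fin.coe_castSucc, Fin.val_succ]
          omega
    · rw [show Fin.last (n + 1) = (Fin.last n).succ from (Fin.succ_last n).symm, hsucc, hl]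
  · -- left inverse
    intro y hy
    simp only [Finset.mem_filter, Finset.mem_univ, true_and] at hy
    obtain ⟨hy, h0, hl⟩ := hy
    obtain ⟨hle, _⟩ := key y hy h0 hl
    funext m
    refine Fin.cases ?_ ?_ m
    · simp [hΨ, h0]
    · intro k
      show (Φ y k).castSucc = y k.succ
      apply Fin.ext
      simp only [Fin.coe_castSucc, hΦ]
      have := hle k.succ
      omega
  · -- right inverse
    intro z _
    funext k
    apply Fin.ext
    show min ((Ψ z k.succ : ℕ)) n = (z k : ℕ)
    have : Ψ z k.succ = (z k).castSucc := by simp [hΨ]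
    rw [this]
    simp only [Fin.coe_castSucc]
    omega
  · -- weights
    intro y hy
    simp only [Finset.mem_filter, Finset.mem_univ, true_and] at hy
    obtain ⟨hy, h0, hl⟩ := hy
    obtain ⟨hle, hstep0⟩ := key y hy h0 hl
    refine lweight_shift n t y (Φ y) ?_ hstep0
    intro m
    simp only [hΦ]
    have := hle m.succ
    omega

end Shift

/-- The recursion for the matrices `L n`: `L 0 = (1)` and
`L (n+1) = F * (L n ⊕ 1)`, where `L n ⊕ 1` is the block diagonal matrix with blocks
`L n` and the `1 × 1` identity, and `F` has top-left block the identity, top-right block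
zero, bottom-right entry `1`, and bottom-left row `-(L (n+1))⁻¹ [n+1, j]` for
`0 ≤ j ≤ n` (the last row of the inverse of `L (n+1)` without its last entry).
Blocks over `Fin (n+1) ⊕ Fin 1` are transported to `Fin (n+2)` via `finSumFinEquiv`. -/
theorem stmt11 {R : Type*} [CommRing R] (t : ℕ → ℕ → R) :
    Lmat 0 t = 1 ∧
      ∀ n : ℕ,
        Lmat (n + 1) t =
          (Matrix.reindex finSumFinEquiv finSumFinEquiv
              (Matrix.fromBlocks (1 : Matrix (Fin (n + 1)) (Fin (n + 1)) R) 0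
                (Matrix.of fun (_ : Fin 1) (j : Fin (n + 1)) =>
                  -((Lmat (n + 1) t)⁻¹ (Fin.last (n + 1)) j.castSucc))
                (1 : Matrix (Fin 1) (Fin 1) R))) *
            (Matrix.reindex finSumFinEquiv finSumFinEquiv
              (Matrix.fromBlocks (Lmat n t) 0 0 (1 : Matrix (Fin 1) (Fin 1) R))) := by
  constructor
  · ext i j
    fin_cases i <;> fin_cases j
    simp [Lmat_diag, Matrix.one_apply]
  · intro n
    rw [Matrix.reindex_apply, Matrix.reindex_apply, Matrix.submatrix_mul_equiv,
      Matrix.fromBlocks_multiply]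
    simp only [Matrix.one_mul, Matrix.mul_one, Matrix.mul_zero, Matrix.zero_mul,
      add_zero, zero_add]
    ext i j
    rw [Matrix.submatrix_apply]
    have hsymm1 : ∀ a : Fin (n + 1), finSumFinEquiv.symm a.castSucc = Sum.inl a := fun a =>
      finSumFinEquiv_symm_apply_castAdd a
    have hsymm2 : finSumFinEquiv.symm (Fin.last (n + 1)) = Sum.inr 0 :=
      finSumFinEquiv_symm_last
    refine Fin.lastCases ?_ ?_ i
    · -- i = last
      refine Fin.lastCases ?_ ?_ j
      · -- j = last
        rw [hsymm2, Matrix.fromBlocks_apply₂₂, Lmat_diag]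
        simp [Matrix.one_apply]
      · intro b
        rw [hsymm2, hsymm1, Matrix.fromBlocks_apply₂₁]
        have hinv := Matrix.nonsing_inv_mul _ (Lmat_isUnit_det (n + 1) t)
        have hent := congrFun (congrFun hinv (Fin.last (n + 1))) b.castSucc
        rw [Matrix.mul_apply, Fin.sum_univ_castSucc,
          Matrix.one_apply_ne (Fin.castSucc_lt_last b).ne',
          Lmat_inv_last_last, one_mul] at hent
        simp only [Lmat_castSucc] at hent
        rw [Matrix.mul_apply]
        simp only [Matrix.of_apply, neg_mul]
        rw [Finset.sum_neg_distrib]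
        linear_combination hent
    · intro a
      refine Fin.lastCases ?_ ?_ j
      · -- j = last
        rw [hsymm1, hsymm2, Matrix.fromBlocks_apply₁₂, Matrix.zero_apply]
        exact Lmat_eq_zero (n + 1) t (Fin.castSucc_lt_last a)
      · intro b
        rw [hsymm1, hsymm1, Matrix.fromBlocks_apply₁₁]
        exact Lmat_castSucc n t a b
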